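/- arXiv:1912.04552 — 2 statements merged into one kernel-verified Lean document; each statement's English description precedes it below -/
import Mathlib

section
/- Let f be a nearly holomorphic modular form of weight k for a discrete subgroup Γ of SL₂(ℝ) containing translation z ↦ z + N for some N > 0, so that f(z) = Σ_{ξ} a(y, ξ) e^{2πiξx} with each a(y, ξ) e^{-2πξy} a polynomial in 1/y times e^{-2πξy}. If f is annihilated by some power of the lowering operator L = -2iy²∂/∂z̄, then each Fourier coefficient a(y, ξ) is of the form p_ξ(1/y) e^{-2πξy} for a polynomial p_ξ of degree bounded independently of ξ. -/
set_option maxHeartbeats 1000000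

open Set


open Complex MeasureTheory

/-- The Wirtinger derivative `∂f/∂z̄ = ½(∂f/∂x + i ∂f/∂y)`. -/
noncomputable def wirtingerZbar (f : ℂ → ℂ) (z : ℂ) : ℂ :=
  (1 / 2) * (fderiv ℝ f z 1 + I * fderiv ℝ f z I)

/-- The weight-lowering Maass operator `L = -2i y² ∂/∂z̄`, as an operator on functions. -/
noncomputable def maassL (f : ℂ → ℂ) : ℂ → ℂ := fun z =>
  -2 * I * (z.im : ℂ) ^ 2 * wirtingerZbar f z

lemma exists_antideriv (p : Polynomial ℂ) :
    ∃ q : Polynomial ℂ, q.natDegree ≤ p.natDegree + 1 ∧ q.derivative = p := by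
  refine ⟨p.sum fun i a => Polynomial.C (a / (i + 1)) * Polynomial.X ^ (i + 1), ?_, ?_⟩
  · refine Polynomial.natDegree_sum_le_of_forall_le _ _ fun i hi => ?_
    calc (Polynomial.C (p.coeff i / (i + 1)) * Polynomial.X ^ (i + 1)).natDegree
        ≤ i + 1 := by
          simpa using Polynomial.natDegree_C_mul_le _ _ |>.trans (by simp)
      _ ≤ p.natDegree + 1 := by
          exact Nat.succ_le_succ (Polynomial.le_natDegree_of_mem_supp i hi)
  · rw [Polynomial.sum_def, map_sum]
    have hterm : ∀ i ∈ p.support,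
        Polynomial.derivative (Polynomial.C (p.coeff i / (i + 1)) * Polynomial.X ^ (i + 1))
          = Polynomial.C (p.coeff i) * Polynomial.X ^ i := by
      intro i _
      rw [Polynomial.derivative_C_mul_X_pow]
      simp only [Nat.add_sub_cancel]
      congr 1
      push_cast
      have hne : ((i : ℂ) + 1) ≠ 0 := by exact_mod_cast (Nat.succ_ne_zero i)
      rw [div_mul_eq_mul_div, mul_comm, ← div_mul_eq_mul_div, div_self hne, one_mul]
    rw [Finset.sum_congr rfl hterm]
    calc ∑ x ∈ p.support, Polynomial.C (p.coeff x) * Polynomial.X ^ x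
        = p.sum fun n a => Polynomial.C a * Polynomial.X ^ n := (Polynomial.sum_def p (fun n a => Polynomial.C a * Polynomial.X ^ n)).symm
      _ = p := p.sum_C_mul_X_pow_eq

lemma const_of_deriv_zero_Ioi (d : ℝ → ℂ) (h : ∀ t ∈ Ioi (0:ℝ), HasDerivAt d 0 t)
    {s t : ℝ} (hs : 0 < s) (ht : 0 < t) : d t = d s := by
  rcases le_total s t with hst | hst
  · have hcont : ContinuousOn d (Icc s t) := fun x hx =>
      ((h x (lt_of_lt_of_le hs hx.1)).continuousAt).continuousWithinAt
    exact constant_of_has_deriv_right_zero hcont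
      (fun x hx => (h x (lt_of_lt_of_le hs hx.1)).hasDerivWithinAt) t ⟨hst, le_rfl⟩
  · have hcont : ContinuousOn d (Icc t s) := fun x hx =>
      ((h x (lt_of_lt_of_le ht hx.1)).continuousAt).continuousWithinAt
    exact (constant_of_has_deriv_right_zero hcont
      (fun x hx => (h x (lt_of_lt_of_le ht hx.1)).hasDerivWithinAt) s ⟨hst, le_rfl⟩).symm

lemma downward_induction (m : ℕ) (c : ℕ → ℝ → ℂ)
    (hd : ∀ j, ∀ t ∈ Ioi (0:ℝ), HasDerivAt (c j) (-(c (j+1) t)) t)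
    (h0 : ∀ t ∈ Ioi (0:ℝ), c m t = 0) :
    ∀ i, i ≤ m → ∃ p : Polynomial ℂ, p.natDegree ≤ i ∧
      ∀ t ∈ Ioi (0:ℝ), c (m - i) t = p.eval (t : ℂ) := by
  intro i
  induction i with
  | zero => exact fun _ => ⟨0, by simp, by simpa using h0⟩
  | succ i ih =>
    intro him
    obtain ⟨p, hdeg, hp⟩ := ih (Nat.le_of_succ_le him)
    obtain ⟨q, hqdeg, hq⟩ := exists_antideriv (-p)
    have hkey : m - (i + 1) + 1 = m - i := by omega
    have hderiv : ∀ t ∈ Ioi (0:ℝ),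
        HasDerivAt (fun t : ℝ => c (m - (i+1)) t - q.eval (t : ℂ)) 0 t := by
      intro t ht
      have h1 := hd (m - (i+1)) t ht
      rw [hkey] at h1
      have h2 : HasDerivAt (fun t : ℝ => q.eval (t : ℂ)) (-(p.eval (t : ℂ))) t := by
        have h3 := (q.hasDerivAt (t : ℂ)).comp_ofReal
        rwa [hq, Polynomial.eval_neg] at h3
      have := h1.sub h2
      rw [hp t ht] at this
      exact this.congr_deriv (by simp)
    refine ⟨q + Polynomial.C (c (m - (i+1)) 1 - q.eval ((1:ℝ) : ℂ)), ?_, ?_⟩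
    · refine (Polynomial.natDegree_add_le _ _).trans ?_
      simp only [Polynomial.natDegree_C, max_eq_left (Nat.zero_le _)]
      exact hqdeg.trans (by simpa using Nat.succ_le_succ hdeg)
    · intro t ht
      have := const_of_deriv_zero_Ioi _ hderiv one_pos ht
      simp only [Polynomial.eval_add, Polynomial.eval_C]
      linear_combination this


lemma isOpen_UH : IsOpen {z : ℂ | 0 < z.im} := isOpen_lt continuous_const Complex.continuous_im

lemma maassL_contDiffOn {g : ℂ → ℂ} (hg : ContDiffOn ℝ (⊤ : ℕ∞) g {z : ℂ | 0 < z.im}) :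
    ContDiffOn ℝ (⊤ : ℕ∞) (maassL g) {z : ℂ | 0 < z.im} := by
  have hD : ContDiffOn ℝ (⊤ : ℕ∞) (fderiv ℝ g) {z : ℂ | 0 < z.im} :=
    hg.fderiv_of_isOpen isOpen_UH (by exact_mod_cast le_refl _)
  have h1 : ContDiffOn ℝ (⊤ : ℕ∞) (fun z => fderiv ℝ g z 1) {z : ℂ | 0 < z.im} :=
    hD.clm_apply contDiffOn_const
  have hI : ContDiffOn ℝ (⊤ : ℕ∞) (fun z => fderiv ℝ g z I) {z : ℂ | 0 < z.im} :=
    hD.clm_apply contDiffOn_const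
  have him : ContDiffOn ℝ (⊤ : ℕ∞) (fun z : ℂ => (z.im : ℂ)) {z : ℂ | 0 < z.im} :=
    (Complex.ofRealCLM.comp Complex.imCLM).contDiff.contDiffOn
  exact (contDiffOn_const.mul (him.pow 2)).mul
    (contDiffOn_const.mul (h1.add (contDiffOn_const.mul hI)))

lemma fderiv_periodic {g : ℂ → ℂ} (hg : ContDiffOn ℝ (⊤ : ℕ∞) g {z : ℂ | 0 < z.im})
    {N : ℝ} (hper : ∀ z : ℂ, 0 < z.im → g (z + (N : ℂ)) = g z)
    {z : ℂ} (hz : 0 < z.im) : fderiv ℝ g (z + (N : ℂ)) = fderiv ℝ g z := by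
  have hzN : 0 < (z + (N : ℂ)).im := by simpa using hz
  have hdiff : DifferentiableAt ℝ g (z + (N : ℂ)) :=
    (hg.differentiableOn (by simp)).differentiableAt
      (isOpen_UH.mem_nhds hzN)
  have htr : HasFDerivAt (fun w : ℂ => w + (N : ℂ)) (ContinuousLinearMap.id ℝ ℂ) z := by
    simpa using (hasFDerivAt_id z).add_const (N : ℂ)
  have hcomp : HasFDerivAt (fun w : ℂ => g (w + (N : ℂ))) (fderiv ℝ g (z + (N : ℂ))) z := by
    simpa [Function.comp_def] using (hdiff.hasFDerivAt.comp z htr)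
  have heq : (fun w : ℂ => g (w + (N : ℂ))) =ᶠ[nhds z] g := by
    filter_upwards [isOpen_UH.mem_nhds hz] with w hw
    exact hper w hw
  exact ((hcomp.congr_of_eventuallyEq heq.symm).fderiv).symm ▸ rfl

lemma maassL_periodic {g : ℂ → ℂ} (hg : ContDiffOn ℝ (⊤ : ℕ∞) g {z : ℂ | 0 < z.im})
    {N : ℝ} (hper : ∀ z : ℂ, 0 < z.im → g (z + (N : ℂ)) = g z)
    {z : ℂ} (hz : 0 < z.im) : maassL g (z + (N : ℂ)) = maassL g z := by
  have h := fderiv_periodic hg hper hz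
  simp only [maassL, wirtingerZbar, h]
  norm_num


lemma line_contOn {y : ℝ} (hy : 0 < y) {g : ℂ → ℂ}
    (hg : ContinuousOn g {z : ℂ | 0 < z.im}) (c : ℂ) :
    Continuous (fun x : ℝ => g ((x : ℂ) + (y : ℂ) * I) * Complex.exp (c * x)) := by
  have hline : Continuous fun x : ℝ => (x : ℂ) + (y : ℂ) * I :=
    Complex.continuous_ofReal.add continuous_const
  have h1 : Continuous fun x : ℝ => g ((x : ℂ) + (y : ℂ) * I) := by
    rw [← continuousOn_univ]
    refine hg.comp hline.continuousOn fun x _ => ?_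
    simp [mem_setOf_eq, hy]
  exact h1.mul (Complex.continuous_exp.comp (continuous_const.mul Complex.continuous_ofReal))

lemma hasDerivAt_coeff {g : ℂ → ℂ} (hg : ContDiffOn ℝ (⊤ : ℕ∞) g {z : ℂ | 0 < z.im})
    {N : ℝ} (hN : 0 < N) (c : ℂ) {y₀ : ℝ} (hy₀ : 0 < y₀) :
    HasDerivAt (fun y : ℝ => ∫ x in (0:ℝ)..N, g ((x : ℂ) + (y : ℂ) * I) * Complex.exp (c * x))
      (∫ x in (0:ℝ)..N, (fderiv ℝ g ((x : ℂ) + (y₀ : ℂ) * I) I) * Complex.exp (c * x)) y₀ := by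
  have hUH := isOpen_UH
  -- continuity of z ↦ fderiv g z I on UH
  have hgy : ContinuousOn (fun z => fderiv ℝ g z I) {z : ℂ | 0 < z.im} :=
    (hg.continuousOn_fderiv_of_isOpen hUH (by exact_mod_cast le_top)).clm_apply
      continuousOn_const
  -- the compact set
  set K : Set ℂ := (fun p : ℝ × ℝ => (p.1 : ℂ) + (p.2 : ℂ) * I) ''
      (Icc 0 N ×ˢ Icc (y₀/2) (3*y₀/2)) with hK
  have hKcomp : IsCompact K :=
    (isCompact_Icc.prod isCompact_Icc).image ((Complex.continuous_ofReal.comp continuous_fst).add ((Complex.continuous_ofReal.comp continuous_snd).mul continuous_const))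
  have hKU : K ⊆ {z : ℂ | 0 < z.im} := by
    rintro z ⟨⟨x, y⟩, ⟨hx, hy⟩, rfl⟩
    simp only [mem_setOf_eq, Complex.add_im, Complex.ofReal_im, Complex.mul_im,
      Complex.ofReal_re, Complex.I_im, Complex.I_re, mul_one, mul_zero]
    simp only [mem_Icc] at hy
    linarith
  obtain ⟨C, hC⟩ := hKcomp.exists_bound_of_continuousOn (hgy.mono hKU)
  obtain ⟨C', hC'⟩ := isCompact_Icc.exists_bound_of_continuousOn
    (Continuous.continuousOn ((Complex.continuous_exp.comp (continuous_const.mul Complex.continuous_ofReal)) :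
      Continuous fun x : ℝ => Complex.exp (c * x)))
  have hC'0 : (0:ℝ) ≤ C' := le_trans (norm_nonneg _) (hC' 0 ⟨le_rfl, hN.le⟩)
  have hball : ∀ y ∈ Metric.ball y₀ (y₀/2), y₀/2 < y ∧ y < 3*y₀/2 := by
    intro y hy
    rw [Metric.mem_ball, Real.dist_eq, abs_lt] at hy
    constructor <;> linarith [hy.1, hy.2]
  have hmemI : ∀ x ∈ Set.uIoc (0:ℝ) N, x ∈ Icc (0:ℝ) N := by
    intro x hx
    rw [Set.uIoc_of_le hN.le] at hx
    exact ⟨hx.1.le, hx.2⟩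
  have key := intervalIntegral.hasDerivAt_integral_of_dominated_loc_of_deriv_le (𝕜 := ℝ)
    (F := fun y x => g ((x : ℂ) + (y : ℂ) * I) * Complex.exp (c * x))
    (F' := fun y x => (fderiv ℝ g ((x : ℂ) + (y : ℂ) * I) I) * Complex.exp (c * x))
    (x₀ := y₀) (a := 0) (b := N) (μ := volume) (bound := fun _ => C * C')
    (Metric.ball_mem_nhds y₀ (half_pos hy₀))
    ?_ ?_ ?_ ?_ ?_ ?_
  · exact key.2
  · -- hF_meas
    filter_upwards [Metric.ball_mem_nhds y₀ (half_pos hy₀)] with y hy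
    have hypos : 0 < y := lt_trans (half_pos hy₀) (hball y hy).1
    exact ((line_contOn hypos hg.continuousOn c).aestronglyMeasurable).restrict
  · -- hF_int
    exact ((line_contOn hy₀ hg.continuousOn c).continuousOn).intervalIntegrable
  · -- hF'_meas
    have : Continuous fun x : ℝ =>
        (fderiv ℝ g ((x : ℂ) + (y₀ : ℂ) * I) I) * Complex.exp (c * x) := by
      have hline : Continuous fun x : ℝ => (x : ℂ) + (y₀ : ℂ) * I :=
        Complex.continuous_ofReal.add continuous_const
      have h1 : Continuous fun x : ℝ => fderiv ℝ g ((x : ℂ) + (y₀ : ℂ) * I) I := by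
        rw [← continuousOn_univ]
        refine hgy.comp hline.continuousOn fun x _ => ?_
        simp [mem_setOf_eq, hy₀]
      exact h1.mul (Complex.continuous_exp.comp (continuous_const.mul Complex.continuous_ofReal))
    exact this.aestronglyMeasurable.restrict
  · -- h_bound
    refine Filter.Eventually.of_forall fun x => fun hx y hy => ?_
    have hxI := hmemI x hx
    have hyI : y ∈ Icc (y₀/2) (3*y₀/2) := ⟨(hball y hy).1.le, (hball y hy).2.le⟩
    have hmem : (x : ℂ) + (y : ℂ) * I ∈ K := ⟨(x, y), ⟨hxI, hyI⟩, rfl⟩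
    rw [norm_mul]
    exact mul_le_mul (hC _ hmem) (hC' x hxI) (norm_nonneg _)
      (le_trans (norm_nonneg _) (hC _ hmem))
  · exact intervalIntegrable_const
  · -- h_diff
    refine Filter.Eventually.of_forall fun x => fun hx y hy => ?_
    have hypos : 0 < y := lt_trans (half_pos hy₀) (hball y hy).1
    set w : ℂ := (x : ℂ) + (y : ℂ) * I with hw
    have hwim : 0 < w.im := by simp [hw, hypos]
    have hdiff : DifferentiableAt ℝ g w :=
      (hg.differentiableOn (by simp)).differentiableAt
        (hUH.mem_nhds hwim)
    have hline : HasDerivAt (fun y : ℝ => (x : ℂ) + (y : ℂ) * I) I y := by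
      have h0 : HasDerivAt (fun y : ℝ => (y : ℂ)) 1 y := by
        simpa using (hasDerivAt_id y).ofReal_comp
      simpa using (h0.mul_const I).const_add (x : ℂ)
    have hcomp : HasDerivAt (fun y : ℝ => g ((x : ℂ) + (y : ℂ) * I))
        (fderiv ℝ g w I) y := by
      simpa [Function.comp_def] using hdiff.hasFDerivAt.comp_hasDerivAt y hline
    exact hcomp.mul_const _


lemma fderiv_line_cont {g : ℂ → ℂ} (hg : ContDiffOn ℝ (⊤ : ℕ∞) g {z : ℂ | 0 < z.im})
    (v : ℂ) {y : ℝ} (hy : 0 < y) :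
    Continuous fun x : ℝ => (fderiv ℝ g ((x : ℂ) + (y : ℂ) * I) v) := by
  have hgy : ContinuousOn (fun z => fderiv ℝ g z v) {z : ℂ | 0 < z.im} :=
    (hg.continuousOn_fderiv_of_isOpen isOpen_UH (by exact_mod_cast le_top)).clm_apply
      continuousOn_const
  have hline : Continuous fun x : ℝ => (x : ℂ) + (y : ℂ) * I :=
    Complex.continuous_ofReal.add continuous_const
  rw [← continuousOn_univ]
  refine hgy.comp hline.continuousOn fun x _ => ?_
  simp [mem_setOf_eq, hy]

lemma line_contOn' {y : ℝ} (hy : 0 < y) {g : ℂ → ℂ}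
    (hg : ContinuousOn g {z : ℂ | 0 < z.im}) (c : ℂ) :
    Continuous (fun x : ℝ => g ((x : ℂ) + (y : ℂ) * I) * Complex.exp (c * x)) := by
  have hline : Continuous fun x : ℝ => (x : ℂ) + (y : ℂ) * I :=
    Complex.continuous_ofReal.add continuous_const
  have h1 : Continuous fun x : ℝ => g ((x : ℂ) + (y : ℂ) * I) := by
    rw [← continuousOn_univ]
    refine hg.comp hline.continuousOn fun x _ => ?_
    simp [mem_setOf_eq, hy]
  exact h1.mul (Complex.continuous_exp.comp (continuous_const.mul Complex.continuous_ofReal))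

lemma integral_dx_coeff {g : ℂ → ℂ} (hg : ContDiffOn ℝ (⊤ : ℕ∞) g {z : ℂ | 0 < z.im})
    {N : ℝ} (hN : 0 < N) (hper : ∀ z : ℂ, 0 < z.im → g (z + (N : ℂ)) = g z)
    (c : ℂ) (hc : Complex.exp (c * N) = 1) {y : ℝ} (hy : 0 < y) :
    ∫ x in (0:ℝ)..N, (fderiv ℝ g ((x : ℂ) + (y : ℂ) * I) 1) * Complex.exp (c * x)
      = -c * ∫ x in (0:ℝ)..N, g ((x : ℂ) + (y : ℂ) * I) * Complex.exp (c * x) := by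
  set u : ℝ → ℂ := fun x => g ((x : ℂ) + (y : ℂ) * I) with hu
  set u' : ℝ → ℂ := fun x => fderiv ℝ g ((x : ℂ) + (y : ℂ) * I) 1 with hu'
  set v : ℝ → ℂ := fun x => Complex.exp (c * x) with hv
  set v' : ℝ → ℂ := fun x => Complex.exp (c * x) * c with hv'
  have hudiff : ∀ x ∈ Set.uIcc (0:ℝ) N, HasDerivAt u (u' x) x := by
    intro x _
    set w : ℂ := (x : ℂ) + (y : ℂ) * I with hw
    have hwim : 0 < w.im := by simp [hw, hy]
    have hdiff : DifferentiableAt ℝ g w :=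
      (hg.differentiableOn (by simp)).differentiableAt
        (isOpen_UH.mem_nhds hwim)
    have hline : HasDerivAt (fun x : ℝ => (x : ℂ) + (y : ℂ) * I) 1 x := by
      have h0 : HasDerivAt (fun x : ℝ => (x : ℂ)) 1 x := by
        simpa using (hasDerivAt_id x).ofReal_comp
      simpa using h0.add_const ((y : ℂ) * I)
    simpa [Function.comp_def] using hdiff.hasFDerivAt.comp_hasDerivAt x hline
  have hvdiff : ∀ x ∈ Set.uIcc (0:ℝ) N, HasDerivAt v (v' x) x := by
    intro x _
    have hin : HasDerivAt (fun x : ℝ => c * (x : ℂ)) c x := by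
      have h0 : HasDerivAt (fun x : ℝ => (x : ℂ)) 1 x := by
        simpa using (hasDerivAt_id x).ofReal_comp
      simpa using h0.const_mul c
    exact hin.cexp
  have hu'int : IntervalIntegrable u' volume 0 N :=
    ContinuousOn.intervalIntegrable (u := u') ((fderiv_line_cont hg 1 hy).continuousOn)
  have hv'int : IntervalIntegrable v' volume 0 N := by
    refine Continuous.intervalIntegrable ?_ _ _
    exact (Complex.continuous_exp.comp (continuous_const.mul Complex.continuous_ofReal)).mul
      continuous_const
  have hparts := intervalIntegral.integral_mul_deriv_eq_deriv_mul hudiff hvdiff hu'int hv'int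
  -- boundary terms
  have hbd : u N * v N - u 0 * v 0 = 0 := by
    have h1 : v N = 1 := by simpa [hv] using hc
    have h2 : v 0 = 1 := by simp [hv]
    have h3 : u N = u 0 := by
      have := hper ((0 : ℝ) + (y : ℂ) * I) (by simp [hy])
      simp only [hu]
      rw [show ((N : ℝ) : ℂ) + (y : ℂ) * I = ((0 : ℝ) : ℂ) + (y : ℂ) * I + (N : ℂ) by
        push_cast; ring]
      rw [this]
    rw [h1, h2, h3]; simp
  rw [hbd, zero_sub] at hparts
  -- LHS of hparts equals c * ∫ u * v
  have hlhs : ∫ x in (0:ℝ)..N, u x * v' x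
      = c * ∫ x in (0:ℝ)..N, u x * v x := by
    rw [← intervalIntegral.integral_const_mul]
    refine intervalIntegral.integral_congr fun x _ => ?_
    simp only [hv, hv']
    ring
  rw [hlhs] at hparts
  -- hparts : c * ∫ u v = - ∫ u' v
  have : ∫ x in (0:ℝ)..N, u' x * v x = -(c * ∫ x in (0:ℝ)..N, u x * v x) := by
    rw [hparts]; ring
  rw [this]; ring

lemma coeff_rec {g : ℂ → ℂ} (hg : ContDiffOn ℝ (⊤ : ℕ∞) g {z : ℂ | 0 < z.im})
    {N : ℝ} (hN : 0 < N) (hper : ∀ z : ℂ, 0 < z.im → g (z + (N : ℂ)) = g z)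
    (c : ℂ) (hc : Complex.exp (c * N) = 1) {y : ℝ} (hy : 0 < y) :
    ∫ x in (0:ℝ)..N, maassL g ((x : ℂ) + (y : ℂ) * I) * Complex.exp (c * x)
      = (y : ℂ)^2 * ((∫ x in (0:ℝ)..N, fderiv ℝ g ((x : ℂ) + (y : ℂ) * I) I
            * Complex.exp (c * x))
          + (I * c) * ∫ x in (0:ℝ)..N, g ((x : ℂ) + (y : ℂ) * I) * Complex.exp (c * x)) := by
  have hexp : Continuous fun x : ℝ => Complex.exp (c * x) :=
    Complex.continuous_exp.comp (continuous_const.mul Complex.continuous_ofReal)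
  have hsplit : ∀ x ∈ Set.uIcc (0:ℝ) N,
      maassL g ((x : ℂ) + (y : ℂ) * I) * Complex.exp (c * x)
        = (-I * (y : ℂ)^2) * ((fderiv ℝ g ((x : ℂ) + (y : ℂ) * I) 1) * Complex.exp (c * x))
          + (y : ℂ)^2 * ((fderiv ℝ g ((x : ℂ) + (y : ℂ) * I) I) * Complex.exp (c * x)) := by
    intro x _
    simp only [maassL, wirtingerZbar, Complex.add_im, Complex.ofReal_im, Complex.mul_im,
      Complex.ofReal_re, Complex.I_im, Complex.I_re, mul_one, mul_zero, zero_add, add_zero]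
    ring_nf
    rw [Complex.I_sq]
    ring
  rw [intervalIntegral.integral_congr hsplit]
  rw [intervalIntegral.integral_add
    (f := fun x : ℝ => (-I * (y : ℂ)^2) * ((fderiv ℝ g ((x : ℂ) + (y : ℂ) * I) 1) * Complex.exp (c * x)))
    (g := fun x : ℝ => (y : ℂ)^2 * ((fderiv ℝ g ((x : ℂ) + (y : ℂ) * I) I) * Complex.exp (c * x)))
    (((continuous_const.mul ((fderiv_line_cont hg 1 hy).mul hexp)).continuousOn).intervalIntegrable)
    (((continuous_const.mul ((fderiv_line_cont hg I hy).mul hexp)).continuousOn).intervalIntegrable),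
    intervalIntegral.integral_const_mul, intervalIntegral.integral_const_mul]
  rw [integral_dx_coeff hg hN hper c hc hy]
  ring


/-- Let `f` be a smooth function on the upper half plane, periodic in `x` with period `N > 0`
(e.g. a nearly holomorphic modular form for a group containing `z ↦ z + N`), which is
annihilated by some power `L^m` (`m ≥ 1`) of the lowering operator `L = -2iy²∂/∂z̄`.  Then each
Fourier coefficient `a(y, ξ) = (1/N)∫₀^N f(x+iy)e^{-2πiξx}dx`, for `ξ ∈ (1/N)ℤ`, has the form
`p_ξ(1/y)·e^{-2πξy}` for a polynomial `p_ξ` whose degree is bounded independently of `ξ`. -/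
theorem nearly_holomorphic_fourier_coefficients
    (f : ℂ → ℂ) (hf : ContDiffOn ℝ (⊤ : ℕ∞) f {z : ℂ | 0 < z.im})
    (N : ℝ) (hN : 0 < N)
    (hper : ∀ z : ℂ, 0 < z.im → f (z + (N : ℂ)) = f z)
    (m : ℕ) (hm : 1 ≤ m)
    (hL : ∀ z : ℂ, 0 < z.im → (maassL^[m] f) z = 0) :
    ∃ M : ℕ, ∀ ξ : ℤ, ∃ p : Polynomial ℂ, p.natDegree ≤ M ∧
      ∀ y : ℝ, 0 < y →
        (1 / (N : ℂ)) * ∫ x in (0:ℝ)..N,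
            f ((x : ℂ) + (y : ℝ) * I) *
              Complex.exp (-(2 * (Real.pi : ℂ) * I * ((ξ : ℂ) / N) * (x : ℂ))) =
          p.eval (1 / (y : ℂ)) * Complex.exp (-(2 * (Real.pi : ℂ) * ((ξ : ℂ) / N) * (y : ℂ))) := by
  have hNne : (N : ℂ) ≠ 0 := by exact_mod_cast hN.ne'
  have hf' : ContDiffOn ℝ (⊤ : ℕ∞) f {z : ℂ | 0 < z.im} := hf.of_le (by simp)
  -- iterates are smooth and periodic
  have hiter : ∀ j : ℕ, ContDiffOn ℝ (⊤ : ℕ∞) (maassL^[j] f) {z : ℂ | 0 < z.im}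
      ∧ ∀ z : ℂ, 0 < z.im → (maassL^[j] f) (z + (N : ℂ)) = (maassL^[j] f) z := by
    intro j
    induction j with
    | zero => exact ⟨by simpa using hf', by simpa using hper⟩
    | succ j ih =>
      rw [Function.iterate_succ_apply']
      exact ⟨maassL_contDiffOn ih.1, fun z hz => maassL_periodic ih.1 ih.2 hz⟩
  refine ⟨m, fun ξ => ?_⟩
  set cc : ℂ := -(2 * (Real.pi : ℂ) * I * ((ξ : ℂ) / N)) with hcc
  set κ : ℂ := 2 * (Real.pi : ℂ) * ((ξ : ℂ) / N) with hκdef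
  have hccN : Complex.exp (cc * N) = 1 := by
    have hdm : ((ξ : ℂ)/N) * N = (ξ : ℂ) := div_mul_cancel₀ _ hNne
    have harg : cc * N = ((-ξ : ℤ) : ℂ) * (2 * (Real.pi : ℂ) * I) := by
      calc cc * N = -(2 * (Real.pi : ℂ) * I) * (((ξ : ℂ)/N) * N) := by rw [hcc]; ring
        _ = ((-ξ : ℤ) : ℂ) * (2 * (Real.pi : ℂ) * I) := by rw [hdm]; push_cast; ring
    rw [harg, Complex.exp_int_mul_two_pi_mul_I]
  have hκ : I * cc = κ := by
    rw [hcc, hκdef]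
    have : (I : ℂ) * I = -1 := Complex.I_mul_I
    ring_nf
    rw [Complex.I_sq]
    ring
  set aF : ℕ → ℝ → ℂ := fun j y =>
    ∫ x in (0:ℝ)..N, (maassL^[j] f) ((x : ℂ) + (y : ℂ) * I) * Complex.exp (cc * x) with haF
  have hrec : ∀ j, ∀ y : ℝ, 0 < y → ∃ d : ℂ, HasDerivAt (aF j) d y ∧
      aF (j+1) y = (y : ℂ)^2 * (d + κ * aF j y) := by
    intro j y hy
    refine ⟨_, hasDerivAt_coeff (hiter j).1 hN cc hy, ?_⟩
    show (∫ x in (0:ℝ)..N, (maassL^[j+1] f) ((x : ℂ) + (y : ℂ) * I) * Complex.exp (cc * x)) = _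
    rw [show maassL^[j+1] f = maassL (maassL^[j] f) from Function.iterate_succ_apply' maassL j f]
    rw [coeff_rec (hiter j).1 hN (hiter j).2 cc hccN hy, hκ]
  -- the substituted functions
  set cf : ℕ → ℝ → ℂ := fun j t => aF j (1/t) * Complex.exp (κ * (((1/t : ℝ)) : ℂ)) with hcf
  have hcder : ∀ j, ∀ t ∈ Set.Ioi (0:ℝ), HasDerivAt (cf j) (-(cf (j+1) t)) t := by
    intro j t ht
    have ht0 : (0:ℝ) < t := ht
    have htne : t ≠ 0 := ne_of_gt ht0
    have htnec : (t : ℂ) ≠ 0 := by exact_mod_cast htne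
    have hyt : 0 < 1/t := by positivity
    obtain ⟨d, hd, hrec1⟩ := hrec j (1/t) hyt
    have hinv : HasDerivAt (fun t : ℝ => 1/t) (-(1/t^2)) t := by
      simpa [one_div] using hasDerivAt_inv htne
    have h1 : HasDerivAt (fun s : ℝ => aF j (1/s)) ((-(1/t^2)) • d) t := hd.scomp t hinv
    have hr : HasDerivAt (fun s : ℝ => (((1/s : ℝ)) : ℂ)) (((-(1/t^2) : ℝ)) : ℂ) t :=
      hinv.ofReal_comp
    have hin : HasDerivAt (fun s : ℝ => κ * (((1/s : ℝ)) : ℂ)) (κ * (((-(1/t^2) : ℝ)) : ℂ)) t :=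
      hr.const_mul κ
    have h2 : HasDerivAt (fun s : ℝ => Complex.exp (κ * (((1/s : ℝ)) : ℂ)))
        (Complex.exp (κ * (((1/t : ℝ)) : ℂ)) * (κ * (((-(1/t^2) : ℝ)) : ℂ))) t := hin.cexp
    have hmul := h1.mul h2
    refine hmul.congr_deriv ?_
    simp only [hcf]
    rw [hrec1, Complex.real_smul]
    push_cast
    field_simp
    ring
  have hctop : ∀ t ∈ Set.Ioi (0:ℝ), cf m t = 0 := by
    intro t ht
    have ht0 : (0:ℝ) < t := ht
    have hzero : aF m (1/t) = 0 := by
      rw [haF]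
      simp only
      rw [intervalIntegral.integral_congr (g := fun _ => (0:ℂ)) ?_]
      · simp
      · intro x _
        show maassL^[m] f ((x : ℂ) + ((1/t : ℝ) : ℂ) * I) * Complex.exp (cc * x) = 0
        rw [hL ((x : ℂ) + ((1/t : ℝ) : ℂ) * I) (by simp; positivity), zero_mul]
    simp only [hcf, hzero, zero_mul]
  obtain ⟨p₀, hp₀deg, hp₀⟩ := downward_induction m cf hcder hctop m le_rfl
  rw [Nat.sub_self] at hp₀
  refine ⟨Polynomial.C (1/(N : ℂ)) * p₀, ?_, ?_⟩
  · exact (Polynomial.natDegree_C_mul_le _ _).trans hp₀deg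
  · intro y hy
    have hyne : y ≠ 0 := ne_of_gt hy
    have hc0 := hp₀ (1/y) (by exact_mod_cast one_div_pos.mpr hy)
    rw [hcf] at hc0
    simp only [one_div_one_div] at hc0
    -- hc0 : aF 0 y * exp (κ * y) = p₀.eval ((1/y : ℝ) : ℂ)
    have hint : (∫ x in (0:ℝ)..N,
        f ((x : ℂ) + (y : ℝ) * I) *
          Complex.exp (-(2 * (Real.pi : ℂ) * I * ((ξ : ℂ) / N) * (x : ℂ)))) = aF 0 y := by
      rw [haF]
      simp only [Function.iterate_zero_apply]
      refine intervalIntegral.integral_congr fun x _ => ?_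
      show f ((x : ℂ) + (y : ℂ) * I) * Complex.exp (-(2 * (Real.pi : ℂ) * I * ((ξ : ℂ) / N) * (x : ℂ)))
        = f ((x : ℂ) + (y : ℂ) * I) * Complex.exp (cc * x)
      rw [hcc]
      congr 2
      ring
    have ha0 : aF 0 y = p₀.eval (((1/y : ℝ)) : ℂ) * Complex.exp (-(κ * y)) := by
      rw [← hc0, mul_assoc, ← Complex.exp_add]
      simp
    rw [hint, ha0]
    rw [Polynomial.eval_mul, Polynomial.eval_C]
    rw [show -(2 * (Real.pi : ℂ) * ((ξ : ℂ) / N) * (y : ℂ)) = -(κ * y) from by rw [hκdef]]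
    push_cast
    ring
end

section
/- For a totally real number field F of degree d ≥ 2, a congruence subgroup Γ of SL₂(F), and an integral dominant parameter λ ∈ ℤ^d_{≥1}, the generalized χ_λ-eigenspace N(Γ, χ_λ)^gen of nearly holomorphic automorphic forms equals the honest χ_λ-eigenspace N(Γ, χ_λ): the center Z(U(𝔤)) acts semisimply on the space of nearly holomorphic automorphic forms. This follows because every nearly holomorphic form on Γ\SL₂(ℝ)^d (with d ≥ 2) generates a highest weight (𝔤, K_∞)-module, and every highest weight module has a genuine (not merely generalized) infinitesimal character. -/
/-
For each `i` the Casimir operator `C` of the `i`-th triple commutes with all generators: with its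
own triple by the `sl₂` relations, with the other triples because their generators commute with
`e i`, `f i`, `h i`. Hence the sum of the eigenspaces of `C` is a `𝔤`-submodule. A highest weight
vector of weight `μ` is an eigenvector of `C` (eigenvalue `μ i ^ 2 / 2 - μ i`), so by the
generation hypothesis `C` is locally diagonalizable, and for such an operator a generalized
eigenvector is an eigenvector because generalized eigenspaces are independent.
-/

open Module End

namespace Module.End

theorem map_iSup_eigenspace_le_of_commute {R M : Type*} [CommRing R] [AddCommGroup M]
    [Module R M] {f g : End R M} (h : Commute f g) :
    (⨆ μ, f.eigenspace μ).map g ≤ ⨆ μ, f.eigenspace μ := by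
  rw [Submodule.map_iSup]
  exact iSup_mono fun μ ↦ Submodule.map_le_iff_le_comap.mpr
    (f.mapsTo_genEigenspace_of_comm h μ 1)

theorem mem_eigenspace_of_mem_maxGenEigenspace_of_mem_iSup_eigenspace {K M : Type*}
    [Field K] [AddCommGroup M] [Module K M] {f : End K M} {c : K} {v : M}
    (hv : v ∈ ⨆ μ, f.eigenspace μ) (hc : v ∈ f.maxGenEigenspace c) :
    v ∈ f.eigenspace c := by
  rw [iSup_split_single _ c, Submodule.mem_sup] at hv
  obtain ⟨a, ha, b, hb, rfl⟩ := hv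
  suffices b = 0 by rwa [this, add_zero]
  have hb_gen : b ∈ f.maxGenEigenspace c := by
    simpa using sub_mem hc (eigenspace_le_maxGenEigenspace ha)
  have hb_other : b ∈ ⨆ (μ) (_ : μ ≠ c), f.maxGenEigenspace μ :=
    iSup₂_mono (fun μ _ ↦ eigenspace_le_maxGenEigenspace) hb
  exact (iSupIndep_def.mp f.independent_maxGenEigenspace c).le_bot ⟨hb_gen, hb_other⟩

end Module.End

section Casimir

variable (K : Type*) {A : Type*} [Field K] [Ring A] [Algebra K A]

def sl2Casimir (E F H : A) : A := E * F + F * E + (1 / 2 : K) • (H * H)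

variable {K} {E F H : A}

theorem sl2Casimir_mul_sub_mul_sl2Casimir (X : A) :
    sl2Casimir K E F H * X - X * sl2Casimir K E F H =
      E * (F * X - X * F) + (E * X - X * E) * F + F * (E * X - X * E) + (F * X - X * F) * E +
        (1 / 2 : K) • (H * (H * X - X * H) + (H * X - X * H) * H) := by
  simp only [sl2Casimir, add_mul, mul_add, mul_sub, sub_mul, smul_mul_assoc, mul_smul_comm,
    smul_add, smul_sub, mul_assoc]
  abel

theorem sl2Casimir_commute_of_commute {X : A} (hE : Commute E X) (hF : Commute F X)
    (hH : Commute H X) : Commute (sl2Casimir K E F H) X :=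
  ((hE.mul_left hF).add_left (hF.mul_left hE)).add_left ((hH.mul_left hH).smul_left _)

theorem sl2Casimir_commute_h (hHF : H * F - F * H = (2 : K) • F)
    (hHE : H * E - E * H = (-2 : K) • E) :
    Commute (sl2Casimir K E F H) H := by
  have hFH : F * H - H * F = (-2 : K) • F := by rw [← neg_sub, hHF, neg_smul]
  have hEH : E * H - H * E = (2 : K) • E := by rw [← neg_sub, hHE, neg_smul, neg_neg]
  rw [commute_iff_eq, ← sub_eq_zero, sl2Casimir_mul_sub_mul_sl2Casimir, hFH, hEH, sub_self]
  simp only [mul_smul_comm, smul_mul_assoc, mul_zero, zero_mul, smul_zero, add_zero]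
  module

variable [CharZero K]

theorem sl2Casimir_commute_e (hHE : H * E - E * H = (-2 : K) • E) (hEF : E * F - F * E = -H) :
    Commute (sl2Casimir K E F H) E := by
  have hFE : F * E - E * F = H := by rw [← neg_sub, hEF, neg_neg]
  rw [commute_iff_eq, ← sub_eq_zero, sl2Casimir_mul_sub_mul_sl2Casimir, hFE, hHE, sub_self]
  simp only [mul_smul_comm, smul_mul_assoc, mul_zero, zero_mul]
  module

theorem sl2Casimir_commute_f (hHF : H * F - F * H = (2 : K) • F) (hEF : E * F - F * E = -H) :
    Commute (sl2Casimir K E F H) F := by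
  rw [commute_iff_eq, ← sub_eq_zero, sl2Casimir_mul_sub_mul_sl2Casimir, hEF, hHF, sub_self]
  simp only [mul_smul_comm, smul_mul_assoc, mul_zero, zero_mul, mul_neg, neg_mul]
  module

end Casimir

section HighestWeight

variable {K M : Type*} [Field K] [AddCommGroup M] [Module K M] {E F H : End K M}

theorem sl2Casimir_apply_of_highest_weight (hEF : E * F - F * E = -H) {w : M} {μ : K}
    (hE : E w = 0) (hH : H w = μ • w) :
    sl2Casimir K E F H w = (μ ^ 2 / 2 - μ) • w := by
  have hEFw : E (F w) = -μ • w := by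
    simpa [hE, hH] using congr($(sub_eq_iff_eq_add.mp hEF) w)
  simp only [sl2Casimir, LinearMap.add_apply, LinearMap.smul_apply, mul_apply, hEFw, hE,
    map_zero, hH, map_smul, smul_smul]
  module

end HighestWeight

/-- Semisimplicity of the action of the center on the space of nearly holomorphic
automorphic forms (the case `d = [F:ℚ] ≥ 2` of a totally real field `F`).

Abstract formulation: let `V` carry an action of `𝔤 = sl₂(ℂ)^d` given by `d` commuting
`sl₂`-triples of operators `(e i, f i, h i)` (the paper's normalization: `[h,f] = 2f`,
`[h,e] = -2e`, `[e,f] = -h`, so that `e` spans the nilradical `𝔭₋` of the Borel `𝔭`, and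
`f` raises weights by 2).  Assume — this is Shimura's structure theorem for `d ≥ 2` — that
every vector of `V` lies in the submodule generated by finitely many highest weight vectors.
Then the `i`-th Casimir operator `C i = e i f i + f i e i + ½ (h i)²` acts semisimply:
every generalized eigenvector of all the `C i` (eigenvalues `c i`) is an honest simultaneous
eigenvector, i.e. the generalized `χ_λ`-eigenspace equals the `χ_λ`-eigenspace. -/
theorem center_acts_semisimply_on_nearly_holomorphic
    {V : Type*} [AddCommGroup V] [Module ℂ V] (d : ℕ)
    (e f h : Fin d → (V →ₗ[ℂ] V))
    (hrel1 : ∀ i, h i ∘ₗ f i - f i ∘ₗ h i = (2 : ℂ) • f i)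
    (hrel2 : ∀ i, h i ∘ₗ e i - e i ∘ₗ h i = (-2 : ℂ) • e i)
    (hrel3 : ∀ i, e i ∘ₗ f i - f i ∘ₗ e i = -(h i))
    (hcomm : ∀ i j, i ≠ j →
      e i ∘ₗ e j = e j ∘ₗ e i ∧ e i ∘ₗ f j = f j ∘ₗ e i ∧ e i ∘ₗ h j = h j ∘ₗ e i ∧
      f i ∘ₗ f j = f j ∘ₗ f i ∧ f i ∘ₗ h j = h j ∘ₗ f i ∧ h i ∘ₗ h j = h j ∘ₗ h i)
    (hhw : ∀ v : V, ∃ (n : ℕ) (w : Fin n → V),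
      (∀ t, ∃ μ : Fin d → ℂ, (∀ i, e i (w t) = 0) ∧ ∀ i, h i (w t) = μ i • w t) ∧
      ∀ p : Submodule ℂ V,
        (∀ i, p.map (e i) ≤ p ∧ p.map (f i) ≤ p ∧ p.map (h i) ≤ p) →
        (∀ t, w t ∈ p) → v ∈ p)
    (c : Fin d → ℂ) (v : V)
    (hgen : ∀ i, ∃ n : ℕ,
      (((e i ∘ₗ f i + f i ∘ₗ e i + (1 / 2 : ℂ) • (h i ∘ₗ h i)) -
        c i • (1 : V →ₗ[ℂ] V)) ^ n) v = 0) :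
    ∀ i, (e i ∘ₗ f i + f i ∘ₗ e i + (1 / 2 : ℂ) • (h i ∘ₗ h i)) v = c i • v := by
  intro i
  set C : End ℂ V := sl2Casimir ℂ (e i) (f i) (h i)
  have hC : ∀ j, Commute C (e j) ∧ Commute C (f j) ∧ Commute C (h j) := by
    intro j
    rcases eq_or_ne i j with rfl | hij
    · exact ⟨sl2Casimir_commute_e (hrel2 i) (hrel3 i), sl2Casimir_commute_f (hrel1 i) (hrel3 i),
        sl2Casimir_commute_h (hrel1 i) (hrel2 i)⟩
    obtain ⟨hee, hef, heh, hff, hfh, hhh⟩ := hcomm i j hij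
    obtain ⟨-, hfe, hhe, -, hhf, -⟩ := hcomm j i hij.symm
    exact ⟨sl2Casimir_commute_of_commute hee (Commute.symm hfe) (Commute.symm hhe),
      sl2Casimir_commute_of_commute hef hff (Commute.symm hhf),
      sl2Casimir_commute_of_commute heh hfh hhh⟩
  have hv : v ∈ ⨆ μ, C.eigenspace μ := by
    obtain ⟨n, w, hw, hspan⟩ := hhw v
    refine hspan _ (fun j ↦ ⟨map_iSup_eigenspace_le_of_commute (hC j).1,
      map_iSup_eigenspace_le_of_commute (hC j).2.1,
      map_iSup_eigenspace_le_of_commute (hC j).2.2⟩) fun t ↦ ?_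
    obtain ⟨μ, he, hh⟩ := hw t
    exact Submodule.mem_iSup_of_mem _
      (mem_eigenspace_iff.mpr (sl2Casimir_apply_of_highest_weight (hrel3 i) (he i) (hh i)))
  exact mem_eigenspace_iff.mp
    (mem_eigenspace_of_mem_maxGenEigenspace_of_mem_iSup_eigenspace hv
      ((mem_maxGenEigenspace _ _ _).mpr (hgen i)))
end
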